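/- arXiv:nlin/0309030 — 10 statements merged into one kernel-verified Lean document; each statement's English description precedes it below -/
import Mathlib

section
/- Let F : ℂ × ℂ × ℂ → ℂ be a function, written F(x,y;α). Say that the three-leg relation holds on a quadrilateral (v0,v1,v2,v3) with parameter pair (α,β) if F(v0,v1;α) = F(v0,v2;α−β)·F(v0,v3;β). Assume: (i) F(x,y;α)·F(x,y;−α) = 1 for all x,y,α ∈ ℂ; (ii) for all v0,v1,v2,v3,α,β ∈ ℂ, the three-leg relation holds on (v0,v1,v2,v3) with (α,β) if and only if it holds on (v1,v2,v3,v0) with (β,α). Then for all x0,x1,x2,x3,x12,x23,x31,x123 ∈ ℂ and all α1,α2,α3 ∈ ℂ: if the three-leg relation holds on (x0,x1,x12,x2) with (α1,α2), on (x0,x2,x23,x3) with (α2,α3), on (x0,x3,x31,x1) with (α3,α1), and on (x1,x12,x123,x31) with (α2,α3), then it also holds on (x2,x23,x123,x12) with (α3,α1) and on (x3,x31,x123,x23) with (α1,α2). -/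
/-!
At a vertex `v`, two three-leg relations sharing a leg can be multiplied together, since the
legs `F v y α` are invertible by the symmetry `F v y α * F v y (-α) = 1`. At `x1` the three
faces through `x1` combine into a "tetrahedral" three-leg relation among the legs to `x123`,
`x2`, `x3`; rotating it to `x3` and combining it there with the two faces through `x3` coming
from `x0` gives the face `(x3, x31, x123, x23)`. The face at `x2` is the same statement with
the directions permuted cyclically, now fed with the face at `x3` instead of the one at `x1`.
-/

def ThreeLeg {V A M : Type*} [Sub A] [Mul M] (F : V → V → A → M) (v0 v1 v2 v3 : V) (α β : A) :
    Prop :=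
  F v0 v1 α = F v0 v2 (α - β) * F v0 v3 β

namespace ThreeLeg

variable {V A M : Type*} [AddCommGroup A] [CommMonoid M] {F : V → V → A → M}
  (hinv : ∀ x y α, F x y α * F x y (-α) = 1)
include hinv

theorem compose {v a b c d e f : V} {α β γ : A} (h₁ : ThreeLeg F v a b c α β)
    (h₂ : ThreeLeg F v c d e β γ) (h₃ : ThreeLeg F v b f d (α - β) (γ - β)) :
    ThreeLeg F v a f e α γ := by
  unfold ThreeLeg at *
  rw [sub_sub_sub_cancel_right] at h₃
  have hd : F v d (γ - β) * F v d (β - γ) = 1 := by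
    simpa only [neg_sub] using hinv v d (γ - β)
  calc F v a α = F v f (α - γ) * F v e γ * (F v d (γ - β) * F v d (β - γ)) := by
        rw [h₁, h₂, h₃]; ac_rfl
    _ = F v f (α - γ) * F v e γ := by rw [hd, mul_one]

theorem cancel {v a b c d e f : V} {α β γ : A} (h₁ : ThreeLeg F v a b c α β)
    (h₂ : ThreeLeg F v c d e β γ) (h₃ : ThreeLeg F v a f e α γ) :
    ThreeLeg F v f b d (α - γ) (β - γ) := by
  unfold ThreeLeg at *
  rw [sub_sub_sub_cancel_right]
  have he : IsUnit (F v e γ) := .of_mul_eq_one _ (hinv v e γ)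
  refine he.mul_right_cancel ?_
  rw [← h₃, h₁, h₂, mul_assoc]

theorem cube_face
    (hcenter : ∀ v0 v1 v2 v3 α β, ThreeLeg F v0 v1 v2 v3 α β ↔ ThreeLeg F v1 v2 v3 v0 β α)
    {x0 x1 x2 x3 x12 x23 x31 x123 : V} {α1 α2 α3 : A}
    (h12 : ThreeLeg F x0 x1 x12 x2 α1 α2) (h23 : ThreeLeg F x0 x2 x23 x3 α2 α3)
    (h31 : ThreeLeg F x0 x3 x31 x1 α3 α1) (h123 : ThreeLeg F x1 x12 x123 x31 α2 α3) :
    ThreeLeg F x3 x31 x123 x23 α1 α2 := by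
  have tetrahedron : ThreeLeg F x1 x123 x2 x3 (α2 - α3) (α1 - α3) :=
    cancel hinv ((hcenter _ _ _ _ _ _).mp h12) ((hcenter _ _ _ _ _ _).mpr h31) h123
  exact compose hinv ((hcenter _ _ _ _ _ _).mp h31) ((hcenter _ _ _ _ _ _).mpr h23)
    ((hcenter _ _ _ _ _ _).mpr tetrahedron)

end ThreeLeg

/-- 3D consistency for quad-graph equations admitting a multiplicative
three-leg form: the three-leg relation on the three faces of the cube
adjacent to `x0`, together with the relation on one of the remaining faces,
implies the relations on the other two remaining faces. -/
theorem threeLeg_3D_consistency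
    (F : ℂ → ℂ → ℂ → ℂ)
    (hsym : ∀ x y α : ℂ, F x y α * F x y (-α) = 1)
    (hcenter : ∀ v0 v1 v2 v3 α β : ℂ,
      (F v0 v1 α = F v0 v2 (α - β) * F v0 v3 β) ↔
      (F v1 v2 β = F v1 v3 (β - α) * F v1 v0 α))
    (x0 x1 x2 x3 x12 x23 x31 x123 α1 α2 α3 : ℂ)
    (h12 : F x0 x1 α1 = F x0 x12 (α1 - α2) * F x0 x2 α2)
    (h23 : F x0 x2 α2 = F x0 x23 (α2 - α3) * F x0 x3 α3)
    (h31 : F x0 x3 α3 = F x0 x31 (α3 - α1) * F x0 x1 α1)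
    (h123 : F x1 x12 α2 = F x1 x123 (α2 - α3) * F x1 x31 α3) :
    (F x2 x23 α3 = F x2 x123 (α3 - α1) * F x2 x12 α1) ∧
    (F x3 x31 α1 = F x3 x123 (α1 - α2) * F x3 x23 α2) := by
  have h3 : ThreeLeg F x3 x31 x123 x23 α1 α2 :=
    ThreeLeg.cube_face hsym hcenter h12 h23 h31 h123
  exact ⟨ThreeLeg.cube_face hsym hcenter h31 h12 h23 h3, h3⟩
end

section
/- Let x0, x1, x2, x3, α, β ∈ ℂ with x0−x1−α ≠ 0, x0−x3+β ≠ 0, and x0−x2−α+β ≠ 0. Then α(x0−x3)(x1−x2) − β(x0−x1)(x3−x2) + αβ(α−β) = 0 if and only if ((x0−x1+α)/(x0−x1−α)) · ((x0−x3−β)/(x0−x3+β)) = (x0−x2+α−β)/(x0−x2−α+β). -/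
theorem q1_threeLeg_cross_mul_sub {R : Type*} [CommRing R] (x0 x1 x2 x3 α β : R) :
    (x0 - x1 + α) * (x0 - x3 - β) * (x0 - x2 - α + β) -
        (x0 - x2 + α - β) * ((x0 - x1 - α) * (x0 - x3 + β)) =
      2 * (α * (x0 - x3) * (x1 - x2) - β * (x0 - x1) * (x3 - x2) + α * β * (α - β)) := by
  ring

/-- The multiplicative three-leg form of equation (Q1) with δ = 1,
centered at `x0`. -/
theorem Q1_delta1_threeLeg_form
    (x0 x1 x2 x3 α β : ℂ)
    (h1 : x0 - x1 - α ≠ 0) (h3 : x0 - x3 + β ≠ 0) (h2 : x0 - x2 - α + β ≠ 0) :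
    α * (x0 - x3) * (x1 - x2) - β * (x0 - x1) * (x3 - x2) + α * β * (α - β) = 0 ↔
    ((x0 - x1 + α) / (x0 - x1 - α)) * ((x0 - x3 - β) / (x0 - x3 + β)) =
      (x0 - x2 + α - β) / (x0 - x2 - α + β) := by
  rw [div_mul_div_comm, div_eq_div_iff (mul_ne_zero h1 h3) h2, ← sub_eq_zero (a := _ * _ * _),
    q1_threeLeg_cross_mul_sub, mul_eq_zero, or_iff_right two_ne_zero]
end

section
/- Let x0, x1, x2, x3, α, β ∈ ℂ, write ui = xi² for i=0,1,2,3, and assume x0 ≠ 0 and that each of x0+x1−α, x0−x1−α, x0+x3+β, x0−x3+β, x0+x2−α+β, x0−x2−α+β is nonzero. Then α(u0−u3)(u1−u2) − β(u0−u1)(u3−u2) + αβ(α−β)(u0+u1+u2+u3) − αβ(α−β)(α²−αβ+β²) = 0 if and only if [ (x0+x1+α)(x0−x1+α) / ((x0+x1−α)(x0−x1−α)) ] · [ (x0+x3−β)(x0−x3−β) / ((x0+x3+β)(x0−x3+β)) ] = (x0+x2+α−β)(x0−x2+α−β) / ((x0+x2−α+β)(x0−x2−α+β)). -/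
def q2 {R : Type*} [CommRing R] (a b u0 u1 u2 u3 : R) : R :=
  a * (u0 - u3) * (u1 - u2) - b * (u0 - u1) * (u3 - u2)
    + a * b * (a - b) * (u0 + u1 + u2 + u3)
    - a * b * (a - b) * (a ^ 2 - a * b + b ^ 2)

theorem threeLeg_cross_sub_eq {R : Type*} [CommRing R] (x0 x1 x2 x3 α β : R) :
    (x0 + x1 + α) * (x0 - x1 + α) * ((x0 + x3 - β) * (x0 - x3 - β)) *
        ((x0 + x2 - α + β) * (x0 - x2 - α + β)) -
      (x0 + x2 + α - β) * (x0 - x2 + α - β) *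
        ((x0 + x1 - α) * (x0 - x1 - α) * ((x0 + x3 + β) * (x0 - x3 + β))) =
    4 * x0 * q2 α β (x0 ^ 2) (x1 ^ 2) (x2 ^ 2) (x3 ^ 2) := by
  unfold q2
  ring

/-- The multiplicative three-leg form of equation (Q2), centered at `x0`,
under the point transformation `u = x²`. -/
theorem Q2_threeLeg_form
    (x0 x1 x2 x3 α β : ℂ) (u0 u1 u2 u3 : ℂ)
    (hu0 : u0 = x0 ^ 2) (hu1 : u1 = x1 ^ 2) (hu2 : u2 = x2 ^ 2) (hu3 : u3 = x3 ^ 2)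
    (hx0 : x0 ≠ 0)
    (d1 : x0 + x1 - α ≠ 0) (d2 : x0 - x1 - α ≠ 0)
    (d3 : x0 + x3 + β ≠ 0) (d4 : x0 - x3 + β ≠ 0)
    (d5 : x0 + x2 - α + β ≠ 0) (d6 : x0 - x2 - α + β ≠ 0) :
    α * (u0 - u3) * (u1 - u2) - β * (u0 - u1) * (u3 - u2)
      + α * β * (α - β) * (u0 + u1 + u2 + u3)
      - α * β * (α - β) * (α ^ 2 - α * β + β ^ 2) = 0 ↔
    ((x0 + x1 + α) * (x0 - x1 + α) / ((x0 + x1 - α) * (x0 - x1 - α))) *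
      ((x0 + x3 - β) * (x0 - x3 - β) / ((x0 + x3 + β) * (x0 - x3 + β))) =
    (x0 + x2 + α - β) * (x0 - x2 + α - β) /
      ((x0 + x2 - α + β) * (x0 - x2 - α + β)) := by
  subst hu0 hu1 hu2 hu3
  have h4x0 : (4 : ℂ) * x0 ≠ 0 := mul_ne_zero (by norm_num) hx0
  have hden : (x0 + x1 - α) * (x0 - x1 - α) * ((x0 + x3 + β) * (x0 - x3 + β)) ≠ 0 :=
    mul_ne_zero (mul_ne_zero d1 d2) (mul_ne_zero d3 d4)
  rw [div_mul_div_comm, div_eq_div_iff hden (mul_ne_zero d5 d6), iff_comm, ← sub_eq_zero,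
    threeLeg_cross_sub_eq, mul_eq_zero, or_iff_right h4x0]
  rfl
end

section
/- Let x0, x1, x2, x3, α, β ∈ ℂ, write ui = exp(2xi) for i=0,1,2,3, a = exp(2α), b = exp(2β), and assume that sinh(x0−x1−α), sinh(x0−x3+β), and sinh(x0−x2−α+β) are nonzero. Then b(a²−1)(u0u1+u2u3) − a(b²−1)(u0u3+u1u2) + (b²−a²)(u0u2+u1u3) = 0 if and only if [ sinh(x0−x1+α)/sinh(x0−x1−α) ] · [ sinh(x0−x3−β)/sinh(x0−x3+β) ] = sinh(x0−x2+α−β)/sinh(x0−x2−α+β). Here sinh is the complex hyperbolic sine. -/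
open Complex

set_option maxHeartbeats 2000000 in
/-- The multiplicative three-leg form of equation (Q3) with δ = 0, centered
at `x0`, under the point transformation `u = exp (2x)`, `a = exp (2α)`,
`b = exp (2β)`. -/
theorem Q3_delta0_threeLeg_form
    (x0 x1 x2 x3 α β : ℂ) (u0 u1 u2 u3 a b : ℂ)
    (hu0 : u0 = exp (2 * x0)) (hu1 : u1 = exp (2 * x1))
    (hu2 : u2 = exp (2 * x2)) (hu3 : u3 = exp (2 * x3))
    (ha : a = exp (2 * α)) (hb : b = exp (2 * β))
    (d1 : sinh (x0 - x1 - α) ≠ 0) (d3 : sinh (x0 - x3 + β) ≠ 0)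
    (d2 : sinh (x0 - x2 - α + β) ≠ 0) :
    b * (a ^ 2 - 1) * (u0 * u1 + u2 * u3) - a * (b ^ 2 - 1) * (u0 * u3 + u1 * u2)
      + (b ^ 2 - a ^ 2) * (u0 * u2 + u1 * u3) = 0 ↔
    (sinh (x0 - x1 + α) / sinh (x0 - x1 - α)) *
      (sinh (x0 - x3 - β) / sinh (x0 - x3 + β)) =
    sinh (x0 - x2 + α - β) / sinh (x0 - x2 - α + β) := by
  have hden : (8 * exp x0 * exp x1 * exp x2 * exp x3 * exp α ^ 2 * exp β ^ 2 : ℂ) ≠ 0 := by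
    simp [Complex.exp_ne_zero]
  have key :
      sinh (x0 - x1 + α) * sinh (x0 - x3 - β) * sinh (x0 - x2 - α + β)
        - sinh (x0 - x2 + α - β) * (sinh (x0 - x1 - α) * sinh (x0 - x3 + β))
      = (b * (a ^ 2 - 1) * (u0 * u1 + u2 * u3)
          - a * (b ^ 2 - 1) * (u0 * u3 + u1 * u2)
          + (b ^ 2 - a ^ 2) * (u0 * u2 + u1 * u3))
        / (8 * exp x0 * exp x1 * exp x2 * exp x3 * exp α ^ 2 * exp β ^ 2) := by
    have hs : ∀ z : ℂ, sinh z = (exp z - exp (-z)) / 2 := fun z => by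
      rw [eq_div_iff (two_ne_zero), mul_comm, Complex.two_sinh]
    subst hu0 hu1 hu2 hu3 ha hb
    rw [eq_div_iff hden]
    simp only [hs, two_mul, neg_add, neg_sub, sub_eq_add_neg,
      Complex.exp_add, Complex.exp_neg]
    field_simp [Complex.exp_ne_zero]
    ring
  rw [div_mul_div_comm, div_eq_div_iff (mul_ne_zero d1 d3) d2,
    ← sub_eq_zero (a := sinh (x0 - x1 + α) * sinh (x0 - x3 - β) *
      sinh (x0 - x2 - α + β)), key, div_eq_zero_iff]
  tauto
end

section
/- Define Q(u0,u1,u2,u3;α,β) := α(u0−u3)(u1−u2) − β(u0−u1)(u3−u2) for complex arguments. Let u0, u1, u2, u3, u12, u23, u31, u123 ∈ ℂ and α1, α2, α3 ∈ ℂ, and assume that on each of the six quadruples (u0,u1,u12,u2), (u0,u2,u23,u3), (u0,u3,u31,u1), (u1,u12,u123,u31), (u2,u23,u123,u12), (u3,u31,u123,u23) the four entries are pairwise distinct. If Q(u0,u1,u12,u2;α1,α2)=0, Q(u0,u2,u23,u3;α2,α3)=0, Q(u0,u3,u31,u1;α3,α1)=0, and Q(u1,u12,u123,u31;α2,α3)=0,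 then Q(u2,u23,u123,u12;α3,α1)=0 and Q(u3,u31,u123,u23;α1,α2)=0. -/
/-- The quad-graph polynomial of equation (Q1) with δ = 0
(the cross-ratio equation). -/
def crossRatioQ (u0 u1 u2 u3 α β : ℂ) : ℂ :=
  α * (u0 - u3) * (u1 - u2) - β * (u0 - u1) * (u3 - u2)

/-- Four complex numbers are pairwise distinct. -/
def PairwiseDistinct4 (a b c d : ℂ) : Prop :=
  a ≠ b ∧ a ≠ c ∧ a ≠ d ∧ b ≠ c ∧ b ≠ d ∧ c ≠ d

/-!
The cross-ratio equation is covariant under Möbius maps. The inversion `w = (u - u₀)⁻¹` sends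
`u₀` to infinity, where the three faces through `u₀` become linear:
`α₁ (w₁₂ - w₁) = α₂ (w₁₂ - w₂)` means `w₁₂ = w₁ + α₂ e₁₂` and `w₂ = w₁ + (α₂ - α₁) e₁₂`
for an edge variable `e₁₂`. Each of the three faces through `u₁₂₃` is an affine equation in
`t = u₁₂₃ - u₀`, and after this parametrisation the three affine forms are proportional,
so they have the same root.
-/

/-- `t * crossRatioQ w0 w1 t⁻¹ w3 α β`, cleared of the denominator, so that the opposite vertex
`t⁻¹` may also be the point at infinity `t = 0`. -/
def crossRatioQInv {K : Type*} [Field K] (w0 w1 w3 α β t : K) : K :=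
  α * (w3 - w0) * (1 - t * w1) - β * (w1 - w0) * (1 - t * w3)

theorem exists_eq_add_mul_of_mul_sub_eq {K : Type*} [Field K] {a b x y z : K}
    (h : a * (z - x) = b * (z - y)) (ha : a ≠ 0) :
    ∃ e, z = x + b * e ∧ y = x + (b - a) * e :=
  ⟨(z - y) / a, by field_simp; linear_combination h, by field_simp; linear_combination h⟩

theorem crossRatioQInv_rotate_eq_zero {K : Type*} [Field K]
    {a1 a2 a3 w1 w2 w3 w12 w23 w31 t : K}
    (h12 : a1 * (w12 - w1) = a2 * (w12 - w2)) (h23 : a2 * (w23 - w2) = a3 * (w23 - w3))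
    (h31 : a3 * (w31 - w3) = a1 * (w31 - w1)) (ha1 : a1 ≠ 0) (ha2 : a2 ≠ 0)
    (hw1 : w1 ≠ w31) (hw12 : w12 ≠ w31) (h : crossRatioQInv w1 w12 w31 a2 a3 t = 0) :
    crossRatioQInv w2 w23 w12 a3 a1 t = 0 := by
  have key : a2 * (w31 - w1) * (w12 - w31) * crossRatioQInv w2 w23 w12 a3 a1 t =
      (a3 * (w12 - w2) * (w23 - w31) - a1 * (w23 - w2) * (w12 - w31)) *
        crossRatioQInv w1 w12 w31 a2 a3 t := by
    obtain ⟨e12, rfl, rfl⟩ := exists_eq_add_mul_of_mul_sub_eq h12 ha1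
    obtain ⟨e23, rfl, rfl⟩ := exists_eq_add_mul_of_mul_sub_eq h23 ha2
    unfold crossRatioQInv
    linear_combination (-(a1 * a2 * a3) * e12 ^ 2 * (1 - t * w31)) * h31
  rw [h, mul_zero] at key
  exact (mul_eq_zero.1 key).resolve_left
    (mul_ne_zero (mul_ne_zero ha2 (sub_ne_zero.2 hw1.symm)) (sub_ne_zero.2 hw12))

theorem PairwiseDistinct4.eq_zero_iff_of_crossRatioQ_eq_zero {a b c d α β : ℂ}
    (hd : PairwiseDistinct4 a b c d) (h : crossRatioQ a b c d α β = 0) : α = 0 ↔ β = 0 := by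
  obtain ⟨hab, -, had, hbc, -, hcd⟩ := hd
  unfold crossRatioQ at h
  constructor <;> rintro rfl
  · simpa [sub_eq_zero, hab, hcd.symm] using h
  · simpa [sub_eq_zero, had, hbc] using h

theorem crossRatioQ_eq_zero_iff_inv_sub {a b c d α β : ℂ} (hb : a ≠ b) (hc : a ≠ c)
    (hd : a ≠ d) :
    crossRatioQ a b c d α β = 0 ↔
      α * ((c - a)⁻¹ - (b - a)⁻¹) = β * ((c - a)⁻¹ - (d - a)⁻¹) := by
  have hb' := sub_ne_zero.2 hb.symm
  have hc' := sub_ne_zero.2 hc.symm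
  have hd' := sub_ne_zero.2 hd.symm
  have : crossRatioQ a b c d α β = (b - a) * (c - a) * (d - a) *
      (β * ((c - a)⁻¹ - (d - a)⁻¹) - α * ((c - a)⁻¹ - (b - a)⁻¹)) := by
    unfold crossRatioQ
    field_simp
    ring
  rw [this, mul_eq_zero, or_iff_right (by positivity), sub_eq_zero, eq_comm]

theorem crossRatioQ_eq_zero_iff_crossRatioQInv {a b c d α β : ℂ} (o : ℂ) (ha : o ≠ a)
    (hb : o ≠ b) (hd : o ≠ d) :
    crossRatioQ a b c d α β = 0 ↔
      crossRatioQInv (a - o)⁻¹ (b - o)⁻¹ (d - o)⁻¹ α β (c - o) = 0 := by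
  have ha' := sub_ne_zero.2 ha.symm
  have hb' := sub_ne_zero.2 hb.symm
  have hd' := sub_ne_zero.2 hd.symm
  have : crossRatioQ a b c d α β = (a - o) * (b - o) * (d - o) *
      crossRatioQInv (a - o)⁻¹ (b - o)⁻¹ (d - o)⁻¹ α β (c - o) := by
    unfold crossRatioQ crossRatioQInv
    field_simp
    ring
  rw [this, mul_eq_zero, or_iff_right (by positivity)]

theorem crossRatio_3D_consistency_general
    (u0 u1 u2 u3 u12 u23 u31 u123 α1 α2 α3 : ℂ)
    (hd1 : PairwiseDistinct4 u0 u1 u12 u2)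
    (hd2 : PairwiseDistinct4 u0 u2 u23 u3)
    (hd3 : PairwiseDistinct4 u0 u3 u31 u1)
    (hd4 : PairwiseDistinct4 u1 u12 u123 u31)
    (hd5 : PairwiseDistinct4 u2 u23 u123 u12)
    (h1 : crossRatioQ u0 u1 u12 u2 α1 α2 = 0)
    (h2 : crossRatioQ u0 u2 u23 u3 α2 α3 = 0)
    (h3 : crossRatioQ u0 u3 u31 u1 α3 α1 = 0)
    (h4 : crossRatioQ u1 u12 u123 u31 α2 α3 = 0) :
    crossRatioQ u2 u23 u123 u12 α3 α1 = 0 ∧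
    crossRatioQ u3 u31 u123 u23 α1 α2 = 0 := by
  by_cases hα1 : α1 = 0
  · obtain rfl := hα1
    obtain rfl := (hd1.eq_zero_iff_of_crossRatioQ_eq_zero h1).1 rfl
    obtain rfl := (hd3.eq_zero_iff_of_crossRatioQ_eq_zero h3).2 rfl
    simp [crossRatioQ]
  have hα2 : α2 ≠ 0 := mt (hd1.eq_zero_iff_of_crossRatioQ_eq_zero h1).2 hα1
  have hα3 : α3 ≠ 0 := mt (hd3.eq_zero_iff_of_crossRatioQ_eq_zero h3).1 hα1
  obtain ⟨h01, h0_12, h02, -, -, -⟩ := hd1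
  obtain ⟨-, h0_23, h03, -, -, -⟩ := hd2
  obtain ⟨-, h0_31, -, -, -, -⟩ := hd3
  obtain ⟨-, -, h1_31, -, h12_31, -⟩ := hd4
  obtain ⟨-, -, h2_12, -, h23_12, -⟩ := hd5
  have hw : Function.Injective fun u : ℂ ↦ (u - u0)⁻¹ :=
    inv_injective.comp sub_left_injective
  have lin12 := (crossRatioQ_eq_zero_iff_inv_sub h01 h0_12 h02).1 h1
  have lin23 := (crossRatioQ_eq_zero_iff_inv_sub h02 h0_23 h03).1 h2
  have lin31 := (crossRatioQ_eq_zero_iff_inv_sub h03 h0_31 h01).1 h3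
  have f4 := (crossRatioQ_eq_zero_iff_crossRatioQInv u0 h01 h0_12 h0_31).1 h4
  have f5 := crossRatioQInv_rotate_eq_zero lin12 lin23 lin31 hα1 hα2
    (hw.ne h1_31) (hw.ne h12_31) f4
  have f6 := crossRatioQInv_rotate_eq_zero lin23 lin31 lin12 hα2 hα3
    (hw.ne h2_12) (hw.ne h23_12) f5
  exact ⟨(crossRatioQ_eq_zero_iff_crossRatioQInv u0 h02 h0_23 h0_12).2 f5,
    (crossRatioQ_eq_zero_iff_crossRatioQInv u0 h03 h0_31 h0_23).2 f6⟩

/-- 3D consistency of the cross-ratio equation (Q1 with δ = 0). -/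
theorem crossRatio_3D_consistency
    (u0 u1 u2 u3 u12 u23 u31 u123 α1 α2 α3 : ℂ)
    (hd1 : PairwiseDistinct4 u0 u1 u12 u2)
    (hd2 : PairwiseDistinct4 u0 u2 u23 u3)
    (hd3 : PairwiseDistinct4 u0 u3 u31 u1)
    (hd4 : PairwiseDistinct4 u1 u12 u123 u31)
    (hd5 : PairwiseDistinct4 u2 u23 u123 u12)
    (hd6 : PairwiseDistinct4 u3 u31 u123 u23)
    (h1 : crossRatioQ u0 u1 u12 u2 α1 α2 = 0)
    (h2 : crossRatioQ u0 u2 u23 u3 α2 α3 = 0)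
    (h3 : crossRatioQ u0 u3 u31 u1 α3 α1 = 0)
    (h4 : crossRatioQ u1 u12 u123 u31 α2 α3 = 0) :
    crossRatioQ u2 u23 u123 u12 α3 α1 = 0 ∧
    crossRatioQ u3 u31 u123 u23 α1 α2 = 0 :=
  crossRatio_3D_consistency_general u0 u1 u2 u3 u12 u23 u31 u123 α1 α2 α3 hd1 hd2 hd3 hd4 hd5 h1 h2
    h3 h4
end

section
/- Fix g2, g3 ∈ ℂ, let r(u) := 4u³ − g2·u − g3, and let H(u,v,w) := (uv+vw+wu+g2/4)² − (u+v+w)(4uvw−g3). Then for all u, v, w ∈ ℂ, (∂H/∂v)(u,v,w)² − 2·H(u,v,w)·(∂²H/∂v²)(u,v,w) = r(u)·r(w), where the derivatives are taken in the middle variable v (H is a quadratic polynomial in v, so ∂H/∂v and ∂²H/∂v² are its first and second derivatives in v). -/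
/-- The Weierstrass cubic polynomial `r(u) = 4u³ − g₂u − g₃`. -/
def weierstrassR (g2 g3 u : ℂ) : ℂ := 4 * u ^ 3 - g2 * u - g3

/-- The symmetric polynomial `H(u,v,w)` encoding the addition theorem on the
elliptic curve `A² = r(a)`. -/
noncomputable def weierstrassH (g2 g3 u v w : ℂ) : ℂ :=
  (u * v + v * w + w * u + g2 / 4) ^ 2 - (u + v + w) * (4 * u * v * w - g3)

/-! For a quadratic `f = a x² + b x + c` one has `f'² − 2 f f'' = b² − 4ac`, so the identity
amounts to computing the discriminant of `H` as a quadratic in its middle variable, which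
factors as `r(u) r(w)`. -/

section Quadratic

variable {𝕜 : Type*} [NontriviallyNormedField 𝕜]

theorem hasDerivAt_quadratic (a b c x : 𝕜) :
    HasDerivAt (fun x => a * x ^ 2 + b * x + c) (2 * a * x + b) x := by
  refine ((((hasDerivAt_pow 2 x).const_mul a).add ((hasDerivAt_id' x).const_mul b)).add_const
    c).congr_deriv ?_
  ring

theorem deriv_sq_sub_two_mul_mul_deriv_deriv_of_quadratic {f : 𝕜 → 𝕜} {a b c : 𝕜}
    (hf : ∀ x, f x = a * x ^ 2 + b * x + c) (x : 𝕜) :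
    deriv f x ^ 2 - 2 * f x * deriv (deriv f) x = discrim a b c := by
  have hf' : f = fun x => a * x ^ 2 + b * x + c := funext hf
  have hderiv : deriv f = fun x => 2 * a * x + b := by
    funext y
    rw [hf', (hasDerivAt_quadratic a b c y).deriv]
  have hderiv2 : deriv (deriv f) x = 2 * a := by simp [hderiv]
  rw [hderiv2, hderiv, hf, discrim]
  ring

end Quadratic

theorem weierstrassH_eq_quadratic (g2 g3 u v w : ℂ) :
    weierstrassH g2 g3 u v w =
      (u - w) ^ 2 * v ^ 2 + ((u + w) * (g2 / 2 - 2 * u * w) + g3) * v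
        + ((u * w + g2 / 4) ^ 2 + (u + w) * g3) := by
  rw [weierstrassH]
  ring

theorem discrim_weierstrassH_coeffs (g2 g3 u w : ℂ) :
    discrim ((u - w) ^ 2) ((u + w) * (g2 / 2 - 2 * u * w) + g3)
        ((u * w + g2 / 4) ^ 2 + (u + w) * g3) =
      weierstrassR g2 g3 u * weierstrassR g2 g3 w := by
  rw [discrim, weierstrassR, weierstrassR]
  ring

/-- The discriminant identity `H_v² − 2·H·H_vv = r(u)·r(w)`, the derivatives
being taken in the middle variable `v`. -/
theorem weierstrassH_discriminant_identity (g2 g3 : ℂ) :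
    ∀ u v w : ℂ,
      (deriv (fun v' => weierstrassH g2 g3 u v' w) v) ^ 2
        - 2 * weierstrassH g2 g3 u v w
          * deriv (deriv (fun v' => weierstrassH g2 g3 u v' w)) v
      = weierstrassR g2 g3 u * weierstrassR g2 g3 w := by
  intro u v w
  rw [deriv_sq_sub_two_mul_mul_deriv_deriv_of_quadratic (weierstrassH_eq_quadratic g2 g3 u · w)]
  exact discrim_weierstrassH_coeffs g2 g3 u w
end

section
/- Fix g2, g3 ∈ ℂ, let r(u) := 4u³ − g2·u − g3 and H(u,v,w) := (uv+vw+wu+g2/4)² − (u+v+w)(4uvw−g3). Let b, B ∈ ℂ with B ≠ 0 and B² = r(b), and define h(u,v) := H(u,v,b)/B. Then for all u, v ∈ ℂ, (∂h/∂v)(u,v)² − 2·h(u,v)·(∂²h/∂v²)(u,v) = r(u), where the derivatives are taken in the second variable v. -/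
/-- The symmetric biquadratic `h(u,v) = H(u,v,b)/B` attached to a point
`(b,B)` of the elliptic curve `B² = r(b)`. -/
noncomputable def biquadratic (g2 g3 b B u v : ℂ) : ℂ := weierstrassH g2 g3 u v b / B

lemma quad_hasDerivAt (c2 c1 c0 B x : ℂ) :
    HasDerivAt (fun v : ℂ => (c2 * v ^ 2 + c1 * v + c0) / B) ((2 * c2 * x + c1) / B) x := by
  have h := (((hasDerivAt_pow 2 x).const_mul c2).add
    (((hasDerivAt_id x).const_mul c1).add (hasDerivAt_const x c0))).div_const B
  have e : (fun v : ℂ => (c2 * v ^ 2 + c1 * v + c0) / B)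
      = fun y : ℂ => ((fun y : ℂ => c2 * y ^ 2) + ((fun y : ℂ => c1 * id y) + fun _ : ℂ => c0)) y / B := by
    funext y
    simp only [Pi.add_apply, id]
    ring
  rw [e]
  refine h.congr_deriv ?_
  push_cast
  ring

/-- The property `h_v² − 2·h·h_vv = r(u)` of the symmetric biquadratic,
derivatives being taken in the second variable `v`. -/
theorem biquadratic_discriminant_identity (g2 g3 b B : ℂ)
    (hB : B ≠ 0) (hcurve : B ^ 2 = weierstrassR g2 g3 b) :
    ∀ u v : ℂ,
      (deriv (fun v' => biquadratic g2 g3 b B u v') v) ^ 2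
        - 2 * biquadratic g2 g3 b B u v
          * deriv (deriv (fun v' => biquadratic g2 g3 b B u v')) v
      = weierstrassR g2 g3 u := by
  intro u v
  set c2 : ℂ := (u + b) ^ 2 - 4 * u * b with hc2
  set c1 : ℂ := 2 * (u + b) * (b * u + g2 / 4) - 4 * u * b * (u + b) + g3 with hc1
  set c0 : ℂ := (b * u + g2 / 4) ^ 2 + (u + b) * g3 with hc0
  have hfun : (fun v' => biquadratic g2 g3 b B u v')
      = fun v' : ℂ => (c2 * v' ^ 2 + c1 * v' + c0) / B := by
    funext v'
    unfold biquadratic weierstrassH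
    rw [hc2, hc1, hc0]
    ring
  have hd1 : ∀ x, deriv (fun v' => biquadratic g2 g3 b B u v') x = (2 * c2 * x + c1) / B := by
    intro x
    rw [hfun]
    exact (quad_hasDerivAt c2 c1 c0 B x).deriv
  have hd1' : deriv (fun v' => biquadratic g2 g3 b B u v')
      = fun x : ℂ => (2 * c2 * x + c1) / B := funext hd1
  have hd2 : deriv (deriv (fun v' => biquadratic g2 g3 b B u v')) v = 2 * c2 / B := by
    rw [hd1']
    have h := (((hasDerivAt_id v).const_mul (2 * c2)).add (hasDerivAt_const v c1)).div_const B
    simpa using h.deriv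
  have hbv : biquadratic g2 g3 b B u v = (c2 * v ^ 2 + c1 * v + c0) / B := congrFun hfun v
  have key : c1 ^ 2 - 4 * c2 * c0 = weierstrassR g2 g3 u * B ^ 2 := by
    rw [hc1, hc2, hc0, weierstrassR]
    rw [weierstrassR] at hcurve
    linear_combination (-(4 * u ^ 3 - g2 * u - g3)) * hcurve
  rw [hd1, hd2, hbv]
  field_simp
  linear_combination key
end

section
/- For all complex numbers x, y, z with sinh x, sinh y, sinh z nonzero: (1/2)·det M = sinh(x+y+z)·sinh(x−y)·sinh(y−z)·sinh(z−x) / (sinh³x · sinh³y · sinh³z), where M is the 3×3 matrix whose rows are (1, 1/sinh²t, −2·cosh t/sinh³t) for t = x, y, z respectively, and sinh, cosh are the complex hyperbolic sine and cosine. -/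
open Complex Matrix

set_option maxHeartbeats 1600000 in
lemma key (A B C : ℂ) (hA : A - 1 ≠ 0) (hB : B - 1 ≠ 0) (hC : C - 1 ≠ 0) :
    (1 / 2 : ℂ) *
      ((4 * B / (B - 1) ^ 2) * (-8 * C * (C + 1) / (C - 1) ^ 3)
        - (4 * C / (C - 1) ^ 2) * (-8 * B * (B + 1) / (B - 1) ^ 3)
        - (4 * A / (A - 1) ^ 2) * (-8 * C * (C + 1) / (C - 1) ^ 3)
        + (4 * C / (C - 1) ^ 2) * (-8 * A * (A + 1) / (A - 1) ^ 3)
        + (4 * A / (A - 1) ^ 2) * (-8 * B * (B + 1) / (B - 1) ^ 3)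
        - (4 * B / (B - 1) ^ 2) * (-8 * A * (A + 1) / (A - 1) ^ 3)) =
    ((A * B * C - 1) * (A - B) * (B - C) * (C - A) * 32) /
      ((A - 1) ^ 3 * (B - 1) ^ 3 * (C - 1) ^ 3) := by
  have hD : (A - 1) ^ 3 * (B - 1) ^ 3 * (C - 1) ^ 3 ≠ 0 := by
    exact mul_ne_zero (mul_ne_zero (pow_ne_zero _ hA) (pow_ne_zero _ hB)) (pow_ne_zero _ hC)
  set D := (A - 1) ^ 3 * (B - 1) ^ 3 * (C - 1) ^ 3 with hDdef
  have e1 : (4 * B / (B - 1) ^ 2) * (-8 * C * (C + 1) / (C - 1) ^ 3)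
      = (-32 * B * C * (C + 1) * (B - 1) * (A - 1) ^ 3) / D := by
    rw [hDdef]; field_simp; ring
  have e2 : (4 * C / (C - 1) ^ 2) * (-8 * B * (B + 1) / (B - 1) ^ 3)
      = (-32 * C * B * (B + 1) * (C - 1) * (A - 1) ^ 3) / D := by
    rw [hDdef]; field_simp; ring
  have e3 : (4 * A / (A - 1) ^ 2) * (-8 * C * (C + 1) / (C - 1) ^ 3)
      = (-32 * A * C * (C + 1) * (A - 1) * (B - 1) ^ 3) / D := by
    rw [hDdef]; field_simp; ring
  have e4 : (4 * C / (C - 1) ^ 2) * (-8 * A * (A + 1) / (A - 1) ^ 3)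
      = (-32 * C * A * (A + 1) * (C - 1) * (B - 1) ^ 3) / D := by
    rw [hDdef]; field_simp; ring
  have e5 : (4 * A / (A - 1) ^ 2) * (-8 * B * (B + 1) / (B - 1) ^ 3)
      = (-32 * A * B * (B + 1) * (A - 1) * (C - 1) ^ 3) / D := by
    rw [hDdef]; field_simp; ring
  have e6 : (4 * B / (B - 1) ^ 2) * (-8 * A * (A + 1) / (A - 1) ^ 3)
      = (-32 * B * A * (A + 1) * (B - 1) * (C - 1) ^ 3) / D := by
    rw [hDdef]; field_simp; ring
  rw [e1, e2, e3, e4, e5, e6, div_sub_div_same, div_sub_div_same, ← add_div,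
    ← add_div, div_sub_div_same, mul_div_assoc']
  rw [div_eq_div_iff hD hD]
  ring

lemma sinh_exp (t : ℂ) : Complex.sinh t = (Complex.exp t ^ 2 - 1) / (2 * Complex.exp t) := by
  have h := Complex.two_sinh t
  rw [Complex.exp_neg] at h
  have hinv : Complex.exp t * (Complex.exp t)⁻¹ = 1 := mul_inv_cancel₀ (Complex.exp_ne_zero t)
  rw [eq_div_iff (mul_ne_zero two_ne_zero (Complex.exp_ne_zero t))]
  linear_combination Complex.exp t * h - hinv

lemma cosh_exp (t : ℂ) : Complex.cosh t = (Complex.exp t ^ 2 + 1) / (2 * Complex.exp t) := by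
  have h := Complex.two_cosh t
  rw [Complex.exp_neg] at h
  have hinv : Complex.exp t * (Complex.exp t)⁻¹ = 1 := mul_inv_cancel₀ (Complex.exp_ne_zero t)
  rw [eq_div_iff (mul_ne_zero two_ne_zero (Complex.exp_ne_zero t))]
  linear_combination Complex.exp t * h + hinv

set_option maxHeartbeats 1600000 in
/-- The hyperbolic degeneration of the Weierstrass determinant identity
`(1/2)·det[[1,℘(x),℘'(x)],[1,℘(y),℘'(y)],[1,℘(z),℘'(z)]]
 = σ(x+y+z)σ(x−y)σ(y−z)σ(z−x)/(σ³(x)σ³(y)σ³(z))`,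
with `σ → sinh`, `℘ → 1/sinh²`, `℘' → −2cosh/sinh³`. -/
theorem sinh_det_identity (x y z : ℂ)
    (hx : sinh x ≠ 0) (hy : sinh y ≠ 0) (hz : sinh z ≠ 0) :
    (1 / 2 : ℂ) *
      (!![1, 1 / sinh x ^ 2, -2 * cosh x / sinh x ^ 3;
          1, 1 / sinh y ^ 2, -2 * cosh y / sinh y ^ 3;
          1, 1 / sinh z ^ 2, -2 * cosh z / sinh z ^ 3] : Matrix (Fin 3) (Fin 3) ℂ).det =
    sinh (x + y + z) * sinh (x - y) * sinh (y - z) * sinh (z - x) /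
      (sinh x ^ 3 * sinh y ^ 3 * sinh z ^ 3) := by
  have ha : Complex.exp x ≠ 0 := Complex.exp_ne_zero x
  have hb : Complex.exp y ≠ 0 := Complex.exp_ne_zero y
  have hc : Complex.exp z ≠ 0 := Complex.exp_ne_zero z
  set a := Complex.exp x with hadef
  set b := Complex.exp y with hbdef
  set c := Complex.exp z with hcdef
  have hA : a ^ 2 - 1 ≠ 0 := by
    intro h; apply hx; rw [sinh_exp, ← hadef, h, zero_div]
  have hB : b ^ 2 - 1 ≠ 0 := by
    intro h; apply hy; rw [sinh_exp, ← hbdef, h, zero_div]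
  have hC : c ^ 2 - 1 ≠ 0 := by
    intro h; apply hz; rw [sinh_exp, ← hcdef, h, zero_div]
  -- entries
  have px : 1 / sinh x ^ 2 = 4 * a ^ 2 / (a ^ 2 - 1) ^ 2 := by
    rw [sinh_exp, ← hadef]; field_simp; ring
  have py : 1 / sinh y ^ 2 = 4 * b ^ 2 / (b ^ 2 - 1) ^ 2 := by
    rw [sinh_exp, ← hbdef]; field_simp; ring
  have pz : 1 / sinh z ^ 2 = 4 * c ^ 2 / (c ^ 2 - 1) ^ 2 := by
    rw [sinh_exp, ← hcdef]; field_simp; ring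
  have qx : -2 * cosh x / sinh x ^ 3 = -8 * a ^ 2 * (a ^ 2 + 1) / (a ^ 2 - 1) ^ 3 := by
    rw [sinh_exp, cosh_exp, ← hadef]; field_simp; ring
  have qy : -2 * cosh y / sinh y ^ 3 = -8 * b ^ 2 * (b ^ 2 + 1) / (b ^ 2 - 1) ^ 3 := by
    rw [sinh_exp, cosh_exp, ← hbdef]; field_simp; ring
  have qz : -2 * cosh z / sinh z ^ 3 = -8 * c ^ 2 * (c ^ 2 + 1) / (c ^ 2 - 1) ^ 3 := by
    rw [sinh_exp, cosh_exp, ← hcdef]; field_simp; ring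
  -- RHS
  have s1 : sinh (x + y + z) = ((a * b * c) ^ 2 - 1) / (2 * (a * b * c)) := by
    rw [sinh_exp, Complex.exp_add, Complex.exp_add, ← hadef, ← hbdef, ← hcdef]
  have s2 : sinh (x - y) = (a ^ 2 - b ^ 2) / (2 * (a * b)) := by
    rw [sinh_exp, Complex.exp_sub, ← hadef, ← hbdef]; field_simp
  have s3 : sinh (y - z) = (b ^ 2 - c ^ 2) / (2 * (b * c)) := by
    rw [sinh_exp, Complex.exp_sub, ← hbdef, ← hcdef]; field_simp
  have s4 : sinh (z - x) = (c ^ 2 - a ^ 2) / (2 * (c * a)) := by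
    rw [sinh_exp, Complex.exp_sub, ← hcdef, ← hadef]; field_simp
  have habc : a ^ 3 * b ^ 3 * c ^ 3 ≠ 0 :=
    mul_ne_zero (mul_ne_zero (pow_ne_zero _ ha) (pow_ne_zero _ hb)) (pow_ne_zero _ hc)
  have hM : (16 : ℂ) * (a ^ 3 * b ^ 3 * c ^ 3) ≠ 0 :=
    mul_ne_zero (by norm_num) habc
  have hM' : (512 : ℂ) * (a ^ 3 * b ^ 3 * c ^ 3) ≠ 0 :=
    mul_ne_zero (by norm_num) habc
  have hQ : (2 * (a * b * c)) * (2 * (a * b)) * (2 * (b * c)) * (2 * (c * a)) ≠ 0 := by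
    apply mul_ne_zero (mul_ne_zero (mul_ne_zero _ _) _) <;>
      exact mul_ne_zero two_ne_zero (by simp [ha, hb, hc, mul_ne_zero])
  have hNum : sinh (x + y + z) * sinh (x - y) * sinh (y - z) * sinh (z - x) =
      ((a ^ 2 * b ^ 2 * c ^ 2 - 1) * (a ^ 2 - b ^ 2) * (b ^ 2 - c ^ 2) * (c ^ 2 - a ^ 2)) /
        (16 * (a ^ 3 * b ^ 3 * c ^ 3)) := by
    rw [s1, s2, s3, s4, div_mul_div_comm, div_mul_div_comm, div_mul_div_comm,
      div_eq_div_iff hQ hM]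
    ring
  have hQ2 : (2 * a) ^ 3 * (2 * b) ^ 3 * (2 * c) ^ 3 ≠ 0 := by
    apply mul_ne_zero (mul_ne_zero _ _) <;>
      exact pow_ne_zero _ (mul_ne_zero two_ne_zero (by assumption))
  have hDen : sinh x ^ 3 * sinh y ^ 3 * sinh z ^ 3 =
      ((a ^ 2 - 1) ^ 3 * (b ^ 2 - 1) ^ 3 * (c ^ 2 - 1) ^ 3) /
        (512 * (a ^ 3 * b ^ 3 * c ^ 3)) := by
    rw [sinh_exp x, sinh_exp y, sinh_exp z, ← hadef, ← hbdef, ← hcdef,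
      div_pow, div_pow, div_pow, div_mul_div_comm, div_mul_div_comm,
      div_eq_div_iff hQ2 hM']
    ring
  have hD3 : (a ^ 2 - 1) ^ 3 * (b ^ 2 - 1) ^ 3 * (c ^ 2 - 1) ^ 3 ≠ 0 :=
    mul_ne_zero (mul_ne_zero (pow_ne_zero _ hA) (pow_ne_zero _ hB)) (pow_ne_zero _ hC)
  have hRHS : sinh (x + y + z) * sinh (x - y) * sinh (y - z) * sinh (z - x) /
      (sinh x ^ 3 * sinh y ^ 3 * sinh z ^ 3) =
      ((a ^ 2 * b ^ 2 * c ^ 2 - 1) * (a ^ 2 - b ^ 2) * (b ^ 2 - c ^ 2) * (c ^ 2 - a ^ 2) * 32) /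
        ((a ^ 2 - 1) ^ 3 * (b ^ 2 - 1) ^ 3 * (c ^ 2 - 1) ^ 3) := by
    rw [hNum, hDen, div_div_div_comm]
    have h32 : (16 * (a ^ 3 * b ^ 3 * c ^ 3)) / (512 * (a ^ 3 * b ^ 3 * c ^ 3))
        = 1 / 32 := by
      rw [div_eq_div_iff hM' (by norm_num : (32 : ℂ) ≠ 0)]; ring
    rw [h32, div_div_eq_mul_div, div_one, div_mul_eq_mul_div]
  rw [Matrix.det_fin_three]
  simp only [Matrix.cons_val', Matrix.cons_val_zero, Matrix.cons_val_one, Matrix.head_cons,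
    Matrix.head_fin_const, Matrix.empty_val', Matrix.cons_val_fin_one, Matrix.cons_val_two,
    Matrix.tail_cons, Matrix.of_apply]
  rw [px, py, pz, qx, qy, qz, hRHS]
  have := key (a ^ 2) (b ^ 2) (c ^ 2) hA hB hC
  linear_combination this
end

section
/- For complex x with sinh(2x) ≠ 0 and complex parameters, define the 2×2 complex matrix N(x;β,α) := (1/sinh(2x)) · [[−sinh²(x−α), 1], [−sinh²(x+β)·sinh²(x−α), sinh²(x+β)]]. Then for all α, β, γ ∈ ℂ and all x with sinh(2x) ≠ 0: (a) N(x;γ,β) · N(x;β,α) = sinh(2β) · N(x;γ,α); and (b) N(x;γ,β) · N(x;−β,−α) = 0 (the zero matrix). Here sinh is the complex hyperbolic sine. -/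
open Complex Matrix

/-- The hyperbolic degeneration of the rank-one matrix
`N(x;β,α) = (σ²(x+β)σ²(x−α)/σ(2x))·[[−℘(x+β), ℘(x+β)℘(x−α)],[−1, ℘(x−α)]]`,
with `σ → sinh`, `℘ → 1/sinh²`. -/
noncomputable def Nsinh (x β α : ℂ) : Matrix (Fin 2) (Fin 2) ℂ :=
  (1 / sinh (2 * x)) •
    !![-(sinh (x - α)) ^ 2, 1;
       -(sinh (x + β)) ^ 2 * (sinh (x - α)) ^ 2, (sinh (x + β)) ^ 2]

lemma sinh_sq_sub_sinh_sq (x β : ℂ) :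
    sinh (x + β) ^ 2 - sinh (x - β) ^ 2 = sinh (2 * x) * sinh (2 * β) := by
  have hs : ∀ z : ℂ, sinh z = (Complex.exp z - Complex.exp (-z)) / 2 := fun z => rfl
  simp only [hs, Complex.exp_add, Complex.exp_sub, Complex.exp_neg, two_mul, neg_add]
  have h1 := Complex.exp_ne_zero x
  have h2 := Complex.exp_ne_zero β
  field_simp
  ring

/-- The rank-one matrix identities `N(x;γ,β)N(x;β,α) = sinh(2β)·N(x;γ,α)` and
`N(x;γ,β)N(x;−β,−α) = 0` governing the telescopic multiplication of the
transition matrices. -/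
theorem Nsinh_rank_one_identities (α β γ x : ℂ) (hx : sinh (2 * x) ≠ 0) :
    Nsinh x γ β * Nsinh x β α = sinh (2 * β) • Nsinh x γ α ∧
    Nsinh x γ β * Nsinh x (-β) (-α) = 0 := by
  have key := sinh_sq_sub_sinh_sq x β
  constructor
  · ext i j
    fin_cases i <;> fin_cases j <;>
      · simp [Nsinh, Matrix.mul_apply, Fin.sum_univ_two]
        field_simp
        first
        | linear_combination (-(sinh (x - α) ^ 2 * sinh (2 * x))) * key
        | linear_combination (sinh (2 * x)) ^ 3 * key
        | linear_combination (-(sinh (x + γ) ^ 2 * sinh (x - α) ^ 2 * sinh (2 * x))) * key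
        | linear_combination (sinh (x + γ) ^ 2 * sinh (2 * x) ^ 3) * key
        | linear_combination (-(sinh (x - α) ^ 2)) * key
        | linear_combination key
        | linear_combination (-(sinh (x + γ) ^ 2 * sinh (x - α) ^ 2)) * key
        | linear_combination (sinh (x + γ) ^ 2) * key
  · ext i j
    fin_cases i <;> fin_cases j <;>
      · simp [Nsinh, Matrix.mul_apply, Fin.sum_univ_two, sub_neg_eq_add]
        try field_simp
        try ring
end

section
/- Let β, ε ∈ ℂ and let x, y : ℤ × ℤ → ℂ. Say that z : ℤ × ℤ → ℂ satisfies the discrete Toda equation at (k,n) if ε/(z_{k,n} − z_{k,n+1}) + ε/(z_{k,n} − z_{k,n−1}) + (β−ε)/(z_{k,n} − z_{k−1,n+1}) + (β−ε)/(z_{k,n} − z_{k+1,n−1}) − β/(z_{k,n} − z_{k+1,n}) − β/(z_{k,n} − z_{k−1,n}) = 0. Assume: (a) x satisfies the discrete Toda equation at every (k,n) ∈ ℤ²; (b) for every (k,n), ε/(x_{k,n} − x_{k,n−1}) = β/(x_{k,n} − y_{k,n}) − (β−ε)/(x_{k,n} − x_{k+1,n−1}); (c) all the differences occurring as denominators in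 (a), in (b), and in the two conclusions below are nonzero. Then: (1) for every (k,n), ε/(y_{k,n} − y_{k,n+1}) = β/(y_{k,n} − x_{k,n}) − (β−ε)/(y_{k,n} − y_{k−1,n+1}); and (2) y satisfies the discrete Toda equation at every (k,n) ∈ ℤ². -/
/-- The (rationally degenerated, additive-leg) discrete elliptic Toda
equation on the triangular lattice at the site `(k,n)`, with constant
parameters `β` and `ε`. -/
def DiscreteTodaTriangular (β ε : ℂ) (z : ℤ → ℤ → ℂ) (k n : ℤ) : Prop :=
  ε / (z k n - z k (n + 1)) + ε / (z k n - z k (n - 1))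
    + (β - ε) / (z k n - z (k - 1) (n + 1)) + (β - ε) / (z k n - z (k + 1) (n - 1))
    - β / (z k n - z (k + 1) n) - β / (z k n - z (k - 1) n) = 0

set_option maxHeartbeats 2000000 in
/-- The rational degeneration of the proposition of Section 7: if `x` solves
the discrete Toda system on the triangular lattice and `y` is defined by the
tetrahedron relation, then the tetrahedron relation with the roles of `x`
and `y` exchanged holds, and `y` also solves the discrete Toda system. -/
theorem discreteToda_duality (β ε : ℂ) (x y : ℤ → ℤ → ℂ)
    (hx : ∀ k n : ℤ, DiscreteTodaTriangular β ε x k n)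
    (hxy : ∀ k n : ℤ, ε / (x k n - x k (n - 1)) =
      β / (x k n - y k n) - (β - ε) / (x k n - x (k + 1) (n - 1)))
    (hd1 : ∀ k n : ℤ, x k n - x k (n + 1) ≠ 0)
    (hd2 : ∀ k n : ℤ, x k n - x k (n - 1) ≠ 0)
    (hd3 : ∀ k n : ℤ, x k n - x (k - 1) (n + 1) ≠ 0)
    (hd4 : ∀ k n : ℤ, x k n - x (k + 1) (n - 1) ≠ 0)
    (hd5 : ∀ k n : ℤ, x k n - x (k + 1) n ≠ 0)
    (hd6 : ∀ k n : ℤ, x k n - x (k - 1) n ≠ 0)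
    (hd7 : ∀ k n : ℤ, x k n - y k n ≠ 0)
    (hd8 : ∀ k n : ℤ, y k n - y k (n + 1) ≠ 0)
    (hd9 : ∀ k n : ℤ, y k n - y k (n - 1) ≠ 0)
    (hd10 : ∀ k n : ℤ, y k n - y (k - 1) (n + 1) ≠ 0)
    (hd11 : ∀ k n : ℤ, y k n - y (k + 1) (n - 1) ≠ 0)
    (hd12 : ∀ k n : ℤ, y k n - y (k + 1) n ≠ 0)
    (hd13 : ∀ k n : ℤ, y k n - y (k - 1) n ≠ 0)
    (hd14 : ∀ k n : ℤ, y k n - x k n ≠ 0) :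
    (∀ k n : ℤ, ε / (y k n - y k (n + 1)) =
      β / (y k n - x k n) - (β - ε) / (y k n - y (k - 1) (n + 1))) ∧
    (∀ k n : ℤ, DiscreteTodaTriangular β ε y k n) := by
  have e1 : ∀ m : ℤ, m + 1 - 1 = m := fun m => by ring
  have e2 : ∀ m : ℤ, m - 1 + 1 = m := fun m => by ring
  have e3 : ∀ m : ℤ, m + 1 + 1 = m + 2 := fun m => by ring
  have e4 : ∀ m : ℤ, m - 1 - 1 = m - 2 := fun m => by ring
  -- the cleared (polynomial) form of the tetrahedron relation
  have hAc : ∀ k n : ℤ, ε * ((x k n - y k n) * (x k n - x (k+1) (n-1)))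
      = β * ((x k n - x k (n-1)) * (x k n - x (k+1) (n-1)))
        - (β - ε) * ((x k n - x k (n-1)) * (x k n - y k n)) := by
    intro k n
    have h := hxy k n
    have h2 := hd2 k n; have h4 := hd4 k n; have h7 := hd7 k n
    field_simp at h
    linear_combination h
  by_cases hbe : β = ε
  · -- case β = ε
    by_cases he : ε = 0
    · -- β = ε = 0 : everything is trivial
      constructor
      · intro k n; rw [hbe, he]; simp
      · intro k n; simp [DiscreteTodaTriangular, hbe, he]
    · -- β = ε ≠ 0 : y k n = x k (n-1)
      have hyx : ∀ k n : ℤ, y k n = x k (n-1) := by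
        intro k n
        have h := hxy k n
        rw [hbe] at h
        simp only [sub_self, zero_div, sub_zero] at h
        have h2 := hd2 k n; have h7 := hd7 k n
        field_simp at h
        linear_combination -h
      constructor
      · intro k n
        rw [hyx k n, hyx k (n+1), hbe]
        simp only [e1, sub_self, zero_div, sub_zero]
      · intro k n
        have hT := hx k (n-1)
        unfold DiscreteTodaTriangular at hT ⊢
        rw [hbe] at hT ⊢
        rw [hyx k n, hyx k (n+1), hyx k (n-1), hyx (k-1) (n+1), hyx (k+1) (n-1),
          hyx (k+1) n, hyx (k-1) n]
        simp only [e1, e2, e3, e4, sub_self, zero_div, add_zero, sub_zero] at hT ⊢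
        linear_combination hT
  · -- case β ≠ ε
    by_cases he : ε = 0
    · -- ε = 0, β ≠ 0 : y k n = x (k+1) (n-1)
      have hb0 : β ≠ 0 := fun h => hbe (h.trans he.symm)
      have hyx : ∀ k n : ℤ, y k n = x (k+1) (n-1) := by
        intro k n
        have h := hxy k n
        rw [he] at h
        simp only [zero_div, sub_zero] at h
        have h4 := hd4 k n; have h7 := hd7 k n
        field_simp at h
        have h' : β * ((x k n - y k n) - (x k n - x (k+1) (n-1))) = 0 := by
          linear_combination h
        rcases mul_eq_zero.mp h' with h'' | h''
        · exact absurd h'' hb0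
        · linear_combination -h''
      constructor
      · intro k n
        rw [he, hyx k n, hyx (k-1) (n+1)]
        simp only [e1, e2, zero_div, sub_zero, sub_self]
      · intro k n
        have hT := hx (k+1) (n-1)
        unfold DiscreteTodaTriangular at hT ⊢
        rw [he] at hT ⊢
        rw [hyx k n, hyx k (n+1), hyx k (n-1), hyx (k-1) (n+1), hyx (k+1) (n-1),
          hyx (k+1) n, hyx (k-1) n]
        simp only [e1, e2, e3, e4, zero_div, add_zero, zero_add, sub_zero] at hT ⊢
        linear_combination hT
    · -- the generic case : β ≠ ε, ε ≠ 0
      have h1all : ∀ k n : ℤ, ε / (y k n - y k (n + 1)) =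
          β / (y k n - x k n) - (β - ε) / (y k n - y (k - 1) (n + 1)) := by
        intro k n
        -- nondegeneracy of the two extra differences
        have hq : x k n - y k (n+1) ≠ 0 := by
          intro h0
          have hA2 := hAc k (n+1)
          simp only [e1] at hA2
          rw [← sub_eq_zero.mp h0] at hA2
          have key : (ε - β) * ((x k (n+1) - x k n) * (x k n - x (k+1) n)) = 0 := by
            linear_combination hA2
          have f1 : x k (n+1) - x k n ≠ 0 :=
            sub_ne_zero.mpr (Ne.symm (sub_ne_zero.mp (hd1 k n)))
          have f2 := hd5 k n
          rcases mul_eq_zero.mp key with h' | h'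
          · exact hbe (by linear_combination -h')
          · exact (mul_ne_zero f1 f2) h'
        have hr : x k n - y (k-1) (n+1) ≠ 0 := by
          intro h0
          have hA3 := hAc (k-1) (n+1)
          simp only [e1, e2] at hA3
          rw [← sub_eq_zero.mp h0] at hA3
          have key : ε * ((x (k-1) (n+1) - x k n) * (x (k-1) n - x k n)) = 0 := by
            linear_combination hA3
          have f1 : x (k-1) (n+1) - x k n ≠ 0 :=
            sub_ne_zero.mpr (Ne.symm (sub_ne_zero.mp (hd3 k n)))
          have f2 : x (k-1) n - x k n ≠ 0 :=
            sub_ne_zero.mpr (Ne.symm (sub_ne_zero.mp (hd6 k n)))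
          rcases mul_eq_zero.mp key with h' | h'
          · exact he h'
          · exact (mul_ne_zero f1 f2) h'
        -- three-leg forms at x k n of the two neighbouring quads
        have hIV : ε / (x k n - x k (n+1)) - (ε - β) / (x k n - y k (n+1))
            = β / (x k n - x (k+1) n) := by
          have hA2 := hAc k (n+1)
          simp only [e1] at hA2
          have f1 := hd1 k n; have f2 := hd5 k n
          field_simp
          linear_combination hA2
        have hV : ε / (x k n - y (k-1) (n+1)) - (ε - β) / (x k n - x (k-1) (n+1))
            = β / (x k n - x (k-1) n) := by
          have hA3 := hAc (k-1) (n+1)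
          simp only [e1, e2] at hA3
          have f1 := hd3 k n; have f2 := hd6 k n
          field_simp
          linear_combination hA3
        have hT : ε / (x k n - x k (n + 1)) + ε / (x k n - x k (n - 1))
            + (β - ε) / (x k n - x (k - 1) (n + 1)) + (β - ε) / (x k n - x (k + 1) (n - 1))
            - β / (x k n - x (k + 1) n) - β / (x k n - x (k - 1) n) = 0 := hx k n
        have h1 : ε / (x k n - y (k-1) (n+1)) - (ε - β) / (x k n - y k (n+1))
            = β / (x k n - y k n) := by
          linear_combination hIV + hV + hxy k n - hT
        have f8 := hd8 k n; have f14 := hd14 k n; have f10 := hd10 k n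
        have f7 := hd7 k n
        field_simp at h1 ⊢
        linear_combination h1
      refine ⟨h1all, fun k n => ?_⟩
      -- cleared form of the dual tetrahedron relation
      have hBc : ∀ k n : ℤ, ε * ((y k n - x k n) * (y k n - y (k-1) (n+1)))
          = β * ((y k n - y k (n+1)) * (y k n - y (k-1) (n+1)))
            - (β - ε) * ((y k n - y k (n+1)) * (y k n - x k n)) := by
        intro k n
        have h := h1all k n
        have f8 := hd8 k n; have f14 := hd14 k n; have f10 := hd10 k n
        field_simp at h
        linear_combination h
      have hpx1 : y k n - x k (n-1) ≠ 0 := by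
        intro h0
        have hB1 := hBc k (n-1)
        simp only [e2] at hB1
        rw [← sub_eq_zero.mp h0] at hB1
        have key : (ε - β) * ((y k (n-1) - y k n) * (y k n - y (k-1) n)) = 0 := by
          linear_combination hB1
        have f1 : y k (n-1) - y k n ≠ 0 :=
          sub_ne_zero.mpr (Ne.symm (sub_ne_zero.mp (hd9 k n)))
        have f2 := hd13 k n
        rcases mul_eq_zero.mp key with h' | h'
        · exact hbe (by linear_combination -h')
        · exact (mul_ne_zero f1 f2) h'
      have hpx2 : y k n - x (k+1) (n-1) ≠ 0 := by
        intro h0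
        have hB2 := hBc (k+1) (n-1)
        simp only [e1, e2] at hB2
        rw [← sub_eq_zero.mp h0] at hB2
        have key : ε * ((y (k+1) (n-1) - y k n) * (y (k+1) n - y k n)) = 0 := by
          linear_combination hB2
        have f1 : y (k+1) (n-1) - y k n ≠ 0 :=
          sub_ne_zero.mpr (Ne.symm (sub_ne_zero.mp (hd11 k n)))
        have f2 : y (k+1) n - y k n ≠ 0 :=
          sub_ne_zero.mpr (Ne.symm (sub_ne_zero.mp (hd12 k n)))
        rcases mul_eq_zero.mp key with h' | h'
        · exact he h'
        · exact (mul_ne_zero f1 f2) h'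
      -- the three remaining three-leg forms at y k n
      have hI : ε / (y k n - y k (n-1)) - (ε - β) / (y k n - x k (n-1))
          = β / (y k n - y (k-1) n) := by
        have hB1 := hBc k (n-1)
        simp only [e2] at hB1
        have f1 := hd9 k n; have f2 := hd13 k n
        field_simp
        linear_combination hB1
      have hII : ε / (y k n - x (k+1) (n-1)) - (ε - β) / (y k n - y (k+1) (n-1))
          = β / (y k n - y (k+1) n) := by
        have hB2 := hBc (k+1) (n-1)
        simp only [e1, e2] at hB2
        have f1 := hd11 k n; have f2 := hd12 k n
        field_simp
        linear_combination hB2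
      have hIII : ε / (y k n - x (k+1) (n-1)) - (ε - β) / (y k n - x k (n-1))
          = β / (y k n - x k n) := by
        have hA1 := hAc k n
        have f14 := hd14 k n
        field_simp
        linear_combination hA1
      have h1 := h1all k n
      show ε / (y k n - y k (n + 1)) + ε / (y k n - y k (n - 1))
        + (β - ε) / (y k n - y (k - 1) (n + 1)) + (β - ε) / (y k n - y (k + 1) (n - 1))
        - β / (y k n - y (k + 1) n) - β / (y k n - y (k - 1) n) = 0
      linear_combination h1 + hI + hII - hIII
end
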